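/- arXiv:2203.13468 — 2 statements merged into one kernel-verified Lean document; each statement's English description precedes it below -/
import Mathlib

section
/- With the same setup and assuming: for all m = (m₊,m₋) ∈ ℕ₀^{2N} with |m| ≤ 2M and 𝛌·m = 0 one has m₊ = m₋. Define Λⱼ = { m ∈ NR : 𝛌·m = λⱼ }. Then for every m ∈ Λⱼ there exists n ∈ Λ₀ := { m ∈ NR : 𝛌·m = 0 } with m = eʲ + n, where eʲ is the multi-index with a single 1 in the (+,j) slot. -/
open Finset

/-- Multi-indices `m = (m₊, m₋) ∈ ℕ₀^{2N}`. -/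
abbrev MultiIdx (N : ℕ) := (Fin N → ℕ) × (Fin N → ℕ)

/-- `𝛌·m = Σⱼ λⱼ (m₊ⱼ - m₋ⱼ)`. -/
def lamDot {N : ℕ} (lam : Fin N → ℝ) (m : MultiIdx N) : ℝ :=
  ∑ j, lam j * ((m.1 j : ℝ) - (m.2 j : ℝ))

/-- `|m| = Σⱼ (m₊ⱼ + m₋ⱼ)`. -/
def miSize {N : ℕ} (m : MultiIdx N) : ℕ := ∑ j, (m.1 j + m.2 j)

/-- The partial order `n ≺ m`. -/
def miPrec {N : ℕ} (n m : MultiIdx N) : Prop :=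
  (∀ j, n.1 j + n.2 j ≤ m.1 j + m.2 j) ∧ miSize n < miSize m

/-- `R = { m : |𝛌·m| > ω }`. -/
def Rset {N : ℕ} (lam : Fin N → ℝ) (ω : ℝ) : Set (MultiIdx N) :=
  {m | ω < |lamDot lam m|}

/-- `R_min`: the `≺`-minimal elements of `R`. -/
def Rmin {N : ℕ} (lam : Fin N → ℝ) (ω : ℝ) : Set (MultiIdx N) :=
  {m | m ∈ Rset lam ω ∧ ¬ ∃ n ∈ Rset lam ω, miPrec n m}

/-- `I = { m : ∃ n ∈ R_min, n ≺ m }`. -/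
def Iset {N : ℕ} (lam : Fin N → ℝ) (ω : ℝ) : Set (MultiIdx N) :=
  {m | ∃ n ∈ Rmin lam ω, miPrec n m}

/-- `NR = ℕ₀^{2N} \ (I ∪ R_min)`. -/
def NRset {N : ℕ} (lam : Fin N → ℝ) (ω : ℝ) : Set (MultiIdx N) :=
  (Iset lam ω ∪ Rmin lam ω)ᶜ

/-!
`NR` is disjoint from `R` and `≺`-downward closed. If `|m| > M + 1`, some plus-only index of size
`M + 1` lies `≺`-below `m` and has pairing at least `(M + 1) λ₀ > ω`; so `|m| ≤ M + 1` on `NR`. If `𝛌·m = λⱼ`, then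
`m + ēʲ` has pairing `0` and size at most `M + 2 ≤ 2M`, so the resonance assumption gives
`m₊ = m₋ + eʲ`, i.e. `m = eʲ + (m₋, m₋)`. Finally `(m₋, m₋) ≺ m`, and `NR` is `≺`-downward closed.
-/

lemma lamDot_add {N : ℕ} (lam : Fin N → ℝ) (m n : MultiIdx N) :
    lamDot lam (m + n) = lamDot lam m + lamDot lam n := by
  simp only [lamDot, ← Finset.sum_add_distrib, Prod.fst_add, Prod.snd_add, Pi.add_apply]
  push_cast
  exact Finset.sum_congr rfl fun _ _ => by ring

lemma lamDot_diag {N : ℕ} (lam : Fin N → ℝ) (a : Fin N → ℕ) : lamDot lam (a, a) = 0 := by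
  simp [lamDot]

lemma lamDot_single_snd {N : ℕ} (lam : Fin N → ℝ) (j : Fin N) :
    lamDot lam (0, Pi.single j 1) = -lam j := by
  simp [lamDot, Pi.single_apply]

lemma miSize_add {N : ℕ} (m n : MultiIdx N) : miSize (m + n) = miSize m + miSize n := by
  simp only [miSize, ← Finset.sum_add_distrib, Prod.fst_add, Prod.snd_add, Pi.add_apply]
  exact Finset.sum_congr rfl fun _ _ => by ring

lemma miSize_single_snd {N : ℕ} (j : Fin N) : miSize ((0, Pi.single j 1) : MultiIdx N) = 1 := by
  simp [miSize, Pi.single_apply]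

lemma miSize_single_fst {N : ℕ} (j : Fin N) : miSize ((Pi.single j 1, 0) : MultiIdx N) = 1 := by
  simp [miSize, Pi.single_apply]

lemma miPrec_trans {N : ℕ} {a b c : MultiIdx N} (hab : miPrec a b) (hbc : miPrec b c) :
    miPrec a c :=
  ⟨fun j => (hab.1 j).trans (hbc.1 j), hab.2.trans hbc.2⟩

lemma miPrec_add_left {N : ℕ} {a : MultiIdx N} (ha : 0 < miSize a) (n : MultiIdx N) :
    miPrec n (a + n) := by
  refine ⟨fun j => ?_, by rw [miSize_add]; omega⟩
  simp only [Prod.fst_add, Prod.snd_add, Pi.add_apply]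
  omega

lemma exists_mem_Rmin_of_mem_Rset {N : ℕ} {lam : Fin N → ℝ} {ω : ℝ} {n : MultiIdx N}
    (hn : n ∈ Rset lam ω) : ∃ n' ∈ Rmin lam ω, n' = n ∨ miPrec n' n := by
  induction hk : miSize n using Nat.strong_induction_on generalizing n with
  | _ k ih =>
    by_cases hmin : n ∈ Rmin lam ω
    · exact ⟨n, hmin, Or.inl rfl⟩
    · obtain ⟨n₂, hn₂, hprec⟩ : ∃ n₂ ∈ Rset lam ω, miPrec n₂ n := by
        simpa [Rmin, hn] using hmin
      obtain ⟨n', hn', rfl | h⟩ := ih _ (hk ▸ hprec.2) hn₂ rfl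
      · exact ⟨n', hn', Or.inr hprec⟩
      · exact ⟨n', hn', Or.inr (miPrec_trans h hprec)⟩

lemma not_mem_Rset_of_mem_NRset {N : ℕ} {lam : Fin N → ℝ} {ω : ℝ} {m : MultiIdx N}
    (hm : m ∈ NRset lam ω) : m ∉ Rset lam ω := fun hR => by
  obtain ⟨n, hn, rfl | hprec⟩ := exists_mem_Rmin_of_mem_Rset hR
  · exact hm (Or.inr hn)
  · exact hm (Or.inl ⟨n, hn, hprec⟩)

lemma mem_NRset_of_miPrec {N : ℕ} {lam : Fin N → ℝ} {ω : ℝ} {m n : MultiIdx N}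
    (hm : m ∈ NRset lam ω) (hnm : miPrec n m) : n ∈ NRset lam ω := by
  rintro (⟨n', hn', hprec⟩ | hn)
  · exact hm (Or.inl ⟨n', hn', miPrec_trans hprec hnm⟩)
  · exact hm (Or.inl ⟨n, hn, hnm⟩)

lemma exists_le_sum_eq {N : ℕ} (g : Fin N → ℕ) {k : ℕ} (hk : k ≤ ∑ j, g j) :
    ∃ f : Fin N → ℕ, f ≤ g ∧ ∑ j, f j = k := by
  induction k with
  | zero => exact ⟨0, fun _ => Nat.zero_le _, by simp⟩
  | succ k ih =>
    obtain ⟨f, hfg, hsum⟩ := ih (by omega)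
    obtain ⟨j, hj⟩ : ∃ j, f j < g j := by
      by_contra! h
      have : ∑ j, g j ≤ ∑ j, f j := Finset.sum_le_sum fun j _ => h j
      omega
    refine ⟨f + Pi.single j 1, fun i => ?_, by simp [Finset.sum_add_distrib, hsum]⟩
    rcases eq_or_ne i j with rfl | hij
    · simpa using hj
    · simpa [hij] using hfg i

lemma miSize_le_of_mem_NRset {N : ℕ} {lam : Fin N → ℝ} {ω c : ℝ} (hc : ∀ i, c ≤ lam i)
    {k : ℕ} (hk : ω < k * c) {m : MultiIdx N} (hm : m ∈ NRset lam ω) : miSize m ≤ k := by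
  by_contra! hlt
  obtain ⟨f, hfm, hsum⟩ := exists_le_sum_eq (fun j => m.1 j + m.2 j) hlt.le
  have hprec : miPrec (f, 0) m :=
    ⟨fun j => by simpa using hfm j, by simpa [miSize, hsum] using hlt⟩
  have hlower : k * c ≤ lamDot lam (f, 0) := calc
    (k : ℝ) * c = ∑ i, c * (f i : ℝ) := by rw [← Finset.mul_sum, mul_comm, ← hsum]; push_cast; rfl
    _ ≤ ∑ i, lam i * (f i : ℝ) :=
      Finset.sum_le_sum fun i _ => mul_le_mul_of_nonneg_right (hc i) (Nat.cast_nonneg _)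
    _ = lamDot lam (f, 0) := by simp [lamDot]
  exact not_mem_Rset_of_mem_NRset (mem_NRset_of_miPrec hm hprec)
    (lt_of_lt_of_le (hk.trans_le hlower) (le_abs_self _))

theorem Lambda_j_decomposition_general (N : ℕ) (hN : 0 < N) (lam : Fin N → ℝ)
    (ω : ℝ)
    (hpos : ∀ j, 0 < lam j) (hmono : StrictMono lam)
    (hmax : lam ⟨N - 1, Nat.sub_lt hN one_pos⟩ < ω)
    (M : ℕ) (hM2 : ω ≤ (M : ℝ) * lam ⟨0, hN⟩)
    (hres : ∀ m : MultiIdx N, miSize m ≤ 2 * M → lamDot lam m = 0 → m.1 = m.2) :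
    ∀ j : Fin N, ∀ m ∈ {m ∈ NRset lam ω | lamDot lam m = lam j},
      ∃ n ∈ {m ∈ NRset lam ω | lamDot lam m = 0},
        m = ((Pi.single j 1, (0 : Fin N → ℕ)) : MultiIdx N) + n := by
  rintro j m ⟨hmNR, hmlam⟩
  have hlam₀ : ∀ i, lam ⟨0, hN⟩ ≤ lam i := fun i => hmono.monotone (Nat.zero_le i.val)
  have hlam₀_pos := hpos ⟨0, hN⟩
  have hsize : miSize m ≤ M + 1 :=
    miSize_le_of_mem_NRset hlam₀ (by push_cast; linarith) hmNR
  have hM : 2 ≤ M := by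
    have : (1 : ℝ) < M := by nlinarith [hlam₀ ⟨N - 1, Nat.sub_lt hN one_pos⟩]
    exact_mod_cast this
  have hfst : m.1 = m.2 + Pi.single j 1 :=
    hres (m + (0, Pi.single j 1))
      (by rw [miSize_add, miSize_single_snd]; omega)
      (by rw [lamDot_add, lamDot_single_snd, hmlam, add_neg_cancel])
  have hm : m = (Pi.single j 1, 0) + (m.2, m.2) :=
    Prod.ext (by simp [hfst, add_comm]) (by simp)
  have hprec : miPrec (m.2, m.2) m := by
    have := miPrec_add_left (a := (Pi.single j 1, 0))
      (by rw [miSize_single_fst]; exact one_pos) (m.2, m.2)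
    rwa [← hm] at this
  exact ⟨(m.2, m.2), ⟨mem_NRset_of_miPrec hmNR hprec, lamDot_diag lam m.2⟩, hm⟩

/-- Lemma (combinatorics, part 4): under the assumption that `|m| ≤ 2M` and
`𝛌·m = 0` force `m₊ = m₋`, every `m ∈ Λⱼ = {m ∈ NR : 𝛌·m = λⱼ}` is of the form
`m = eʲ + n` with `n ∈ Λ₀ = {m ∈ NR : 𝛌·m = 0}`. -/
theorem Lambda_j_decomposition (N : ℕ) (hN : 0 < N) (lam : Fin N → ℝ)
    (ω : ℝ) (hω : 0 < ω)
    (hpos : ∀ j, 0 < lam j) (hmono : StrictMono lam)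
    (hmax : lam ⟨N - 1, Nat.sub_lt hN one_pos⟩ < ω)
    (M : ℕ) (hM1 : ((M : ℝ) - 1) * lam ⟨0, hN⟩ < ω) (hM2 : ω ≤ (M : ℝ) * lam ⟨0, hN⟩)
    (hres : ∀ m : MultiIdx N, miSize m ≤ 2 * M → lamDot lam m = 0 → m.1 = m.2) :
    ∀ j : Fin N, ∀ m ∈ {m ∈ NRset lam ω | lamDot lam m = lam j},
      ∃ n ∈ {m ∈ NRset lam ω | lamDot lam m = 0},
        m = ((Pi.single j 1, (0 : Fin N → ℕ)) : MultiIdx N) + n :=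
  Lambda_j_decomposition_general N hN lam ω hpos hmono hmax M hM2 hres
end

section
/- Let U ≥ 0 be a nonzero potential in L¹(ℝ,ℝ). Then there exists a constant C_U > 0 such that for every measurable W ≥ 0 with ⟨x⟩W ∈ L¹(ℝ) and every f ∈ H¹(ℝ), one has ∫ W |f|² dx ≤ C_U ‖⟨x⟩W‖_{L¹} ( ∫ |f'|² dx + ∫ U |f|² dx ). -/
/-!
Since `U ≥ 0` is integrable and not a.e. zero, `m = ∫_{[-R, R]} U > 0` for some `R ≥ 0`.
Testing `U` against `f²` shows that at a minimum point `y` of `f²` on `[-R, R]` one has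
`f(y)² ≤ m⁻¹ ∫ U f²`, while Cauchy–Schwarz gives `(f(x) - f(y))² ≤ |x - y| ∫ f'²`.
As `|x - y| ≤ (1 + R)⟨x⟩`, this yields the pointwise bound `f(x)² ≤ C ⟨x⟩ (∫ f'² + ∫ U f²)`,
which is integrated against `W`. The same two estimates on `[x, x + 1]` show that `f` is
bounded, so that `∫ U f²` is finite.
-/

open Real MeasureTheory Set Filter
open scoped Interval Topology

theorem sq_integral_le_measureReal_mul_integral_sq {α : Type*} [MeasurableSpace α]
    {μ : Measure α} [IsFiniteMeasure μ] {g : α → ℝ} (hg : MemLp g 2 μ) :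
    (∫ a, g a ∂μ) ^ 2 ≤ μ.real univ * ∫ a, g a ^ 2 ∂μ := by
  have holder := integral_mul_le_Lp_mul_Lq_of_nonneg (μ := μ) Real.HolderConjugate.two_two
    (ae_of_all _ fun a => abs_nonneg (g a)) (ae_of_all _ fun _ => zero_le_one)
    (by rw [ENNReal.ofReal_ofNat]; exact hg.abs)
    (by simpa using memLp_const (μ := μ) (p := 2) (1 : ℝ))
  simp only [integral_const, smul_eq_mul, ← sqrt_eq_rpow, rpow_two, one_pow, mul_one,
    sq_abs] at holder
  calc (∫ a, g a ∂μ) ^ 2 = |∫ a, g a ∂μ| ^ 2 := (sq_abs _).symm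
    _ ≤ (√(∫ a, g a ^ 2 ∂μ) * √(μ.real univ)) ^ 2 :=
      pow_le_pow_left₀ (abs_nonneg _) ((abs_integral_le_integral_abs).trans holder) 2
    _ = μ.real univ * ∫ a, g a ^ 2 ∂μ := by
      rw [mul_pow, sq_sqrt (integral_nonneg fun a => sq_nonneg _), sq_sqrt measureReal_nonneg,
        mul_comm]

theorem sq_sub_le_abs_sub_mul_integral_deriv_sq {f : ℝ → ℝ} (hf : Differentiable ℝ f)
    (hf' : MemLp (deriv f) 2) (x y : ℝ) :
    (f x - f y) ^ 2 ≤ |x - y| * ∫ t, deriv f t ^ 2 := by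
  have : IsFiniteMeasure (volume.restrict (Ι y x)) := isFiniteMeasure_restrict.2 (by simp)
  have ftc : ∫ t in y..x, deriv f t = f x - f y :=
    intervalIntegral.integral_deriv_eq_sub (fun t _ => hf t)
      (intervalIntegrable_iff.2 ((hf'.restrict _).integrable one_le_two))
  have hvol : volume.real (Ι y x) = |x - y| := by
    rw [measureReal_def, Real.volume_uIoc, ENNReal.toReal_ofReal (abs_nonneg _)]
  calc (f x - f y) ^ 2 = (∫ t in Ι y x, deriv f t) ^ 2 := by
        rw [← ftc, ← sq_abs, intervalIntegral.abs_integral_eq_abs_integral_uIoc, sq_abs]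
    _ ≤ volume.real (Ι y x) * ∫ t in Ι y x, deriv f t ^ 2 := by
        simpa using sq_integral_le_measureReal_mul_integral_sq (hf'.restrict (Ι y x))
    _ ≤ |x - y| * ∫ t, deriv f t ^ 2 := by
        rw [hvol]
        exact mul_le_mul_of_nonneg_left
          (setIntegral_le_integral hf'.integrable_sq (ae_of_all _ fun t => sq_nonneg _))
          (abs_nonneg _)

theorem exists_mem_setIntegral_mul_le_setIntegral_mul {X : Type*} [TopologicalSpace X]
    [T2Space X] [MeasurableSpace X] [OpensMeasurableSpace X] {μ : Measure X} {K : Set X}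
    (hK : IsCompact K) (hKne : K.Nonempty) {U φ : X → ℝ} (hU : ∀ x ∈ K, 0 ≤ U x)
    (hUi : IntegrableOn U K μ) (hφ : ContinuousOn φ K) :
    ∃ y ∈ K, (∫ x in K, U x ∂μ) * φ y ≤ ∫ x in K, U x * φ x ∂μ := by
  obtain ⟨y, hyK, hmin⟩ := hK.exists_isMinOn hKne hφ
  refine ⟨y, hyK, ?_⟩
  rw [← integral_mul_const]
  exact setIntegral_mono_on (hUi.mul_const _) (hUi.mul_continuousOn hφ hK) hK.measurableSet
    fun x hx => mul_le_mul_of_nonneg_left (hmin hx) (hU x hx)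

theorem sq_le_two_mul_integral_sq_add_two_mul_integral_deriv_sq {f : ℝ → ℝ}
    (hf : Differentiable ℝ f) (hf2 : MemLp f 2) (hf' : MemLp (deriv f) 2) (x : ℝ) :
    f x ^ 2 ≤ 2 * (∫ t, f t ^ 2) + 2 * ∫ t, deriv f t ^ 2 := by
  obtain ⟨y, ⟨hxy, hyx⟩, hfy⟩ := exists_mem_setIntegral_mul_le_setIntegral_mul
    (K := Icc x (x + 1)) (U := fun _ => 1) (φ := fun t => f t ^ 2) (μ := volume)
    isCompact_Icc (nonempty_Icc.2 (le_add_of_nonneg_right zero_le_one))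
    (fun _ _ => zero_le_one) (integrableOn_const (by simp)) (hf.continuous.pow 2).continuousOn
  simp only [integral_const, measureReal_restrict_apply_univ, Real.volume_real_Icc, one_mul,
    add_sub_cancel_left, max_eq_left zero_le_one, smul_eq_mul, mul_one] at hfy
  have hfy_le : f y ^ 2 ≤ ∫ t, f t ^ 2 :=
    hfy.trans (setIntegral_le_integral hf2.integrable_sq (ae_of_all _ fun t => sq_nonneg _))
  have hdist : |x - y| ≤ 1 := abs_sub_le_iff.2 ⟨by linarith, by linarith⟩
  have hosc := sq_sub_le_abs_sub_mul_integral_deriv_sq hf hf' x y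
  have hD : 0 ≤ ∫ t, deriv f t ^ 2 := integral_nonneg fun t => sq_nonneg _
  have hsplit : f x ^ 2 ≤ 2 * (f x - f y) ^ 2 + 2 * f y ^ 2 := by
    nlinarith [sq_nonneg (f x - 2 * f y)]
  nlinarith [mul_le_mul_of_nonneg_right hdist hD]

theorem exists_nonneg_setIntegral_Icc_pos {U : ℝ → ℝ} (hU0 : ∀ x, 0 ≤ U x) (hUi : Integrable U)
    (hUne : ¬ U =ᵐ[volume] 0) : ∃ R, 0 ≤ R ∧ 0 < ∫ x in Icc (-R) R, U x := by
  have hpos : 0 < ∫ x, U x :=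
    (integral_nonneg hU0).lt_of_ne' fun h => hUne ((integral_eq_zero_iff_of_nonneg hU0 hUi).1 h)
  have hlim : Tendsto (fun R => ∫ x in -R..R, U x) atTop (𝓝 (∫ x, U x)) :=
    intervalIntegral_tendsto_integral hUi tendsto_neg_atTop_atBot tendsto_id
  obtain ⟨R, hR, hRpos⟩ :=
    ((eventually_ge_atTop 0).and (hlim.eventually (lt_mem_nhds hpos))).exists
  refine ⟨R, hR, ?_⟩
  rwa [intervalIntegral.integral_of_le (by linarith), ← integral_Icc_eq_integral_Ioc] at hRpos

noncomputable def schrodingerForm (U f : ℝ → ℝ) : ℝ :=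
  (∫ t, deriv f t ^ 2) + ∫ t, U t * f t ^ 2

theorem sq_le_mul_sqrt_one_add_sq_mul_schrodingerForm {U f : ℝ → ℝ} {R : ℝ} (hR : 0 ≤ R)
    (hU0 : ∀ x, 0 ≤ U x) (hUi : Integrable U) (hm : 0 < ∫ x in Icc (-R) R, U x)
    (hf : Differentiable ℝ f) (hf2 : MemLp f 2) (hf' : MemLp (deriv f) 2) (x : ℝ) :
    f x ^ 2 ≤
      2 * ((∫ x in Icc (-R) R, U x)⁻¹ + 1 + R) * √(1 + x ^ 2) * schrodingerForm U f := by
  set m := ∫ x in Icc (-R) R, U x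
  set D₁ := ∫ t, deriv f t ^ 2
  set D₂ := ∫ t, U t * f t ^ 2
  have hUf : Integrable (fun t => U t * f t ^ 2) :=
    hUi.mul_bdd (hf.continuous.pow 2).aestronglyMeasurable (ae_of_all _ fun t => by
      rw [Real.norm_of_nonneg (sq_nonneg _)]
      exact sq_le_two_mul_integral_sq_add_two_mul_integral_deriv_sq hf hf2 hf' t)
  obtain ⟨y, hy, hfy⟩ := exists_mem_setIntegral_mul_le_setIntegral_mul (K := Icc (-R) R)
    (φ := fun t => f t ^ 2) isCompact_Icc (nonempty_Icc.2 (by linarith)) (fun t _ => hU0 t)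
    hUi.integrableOn (hf.continuous.pow 2).continuousOn
  have hfy_le : f y ^ 2 ≤ m⁻¹ * D₂ := by
    rw [inv_mul_eq_div, le_div_iff₀ hm, mul_comm]
    exact hfy.trans (setIntegral_le_integral hUf
      (ae_of_all _ fun t => mul_nonneg (hU0 t) (sq_nonneg _)))
  have hone : 1 ≤ √(1 + x ^ 2) := Real.one_le_sqrt.2 (by nlinarith)
  have hdist : |x - y| ≤ (1 + R) * √(1 + x ^ 2) := by
    have hx : |x| ≤ √(1 + x ^ 2) := Real.abs_le_sqrt (by linarith)
    have hy : |y| ≤ R := abs_le.2 hy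
    nlinarith [abs_sub x y]
  have hD₁ : 0 ≤ D₁ := integral_nonneg fun t => sq_nonneg _
  have hD₂ : 0 ≤ D₂ := integral_nonneg fun t => mul_nonneg (hU0 t) (sq_nonneg _)
  have hgap : 0 ≤ 2 * √(1 + x ^ 2) * (m⁻¹ * D₁ + (1 + R) * D₂) := by positivity
  calc f x ^ 2 ≤ 2 * (f x - f y) ^ 2 + 2 * f y ^ 2 := by nlinarith [sq_nonneg (f x - 2 * f y)]
    _ ≤ 2 * (|x - y| * D₁) + 2 * (m⁻¹ * D₂) := by
      gcongr
      exact sq_sub_le_abs_sub_mul_integral_deriv_sq hf hf' x y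
    _ ≤ 2 * ((1 + R) * √(1 + x ^ 2) * D₁) + 2 * (m⁻¹ * √(1 + x ^ 2) * D₂) := by
      gcongr
      exact le_mul_of_one_le_right (inv_nonneg.2 hm.le) hone
    _ ≤ 2 * (m⁻¹ + 1 + R) * √(1 + x ^ 2) * (D₁ + D₂) := by linear_combination hgap

/-- Weighted coercivity inequality: for `U ≥ 0` nonzero in `L¹`, there is `C_U > 0`
such that for every weight `W ≥ 0` with `⟨x⟩W ∈ L¹` and every `f ∈ H¹(ℝ)`,
`∫ W|f|² ≤ C_U ‖⟨x⟩W‖_{L¹} (∫ |f'|² + ∫ U|f|²)`. -/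
theorem weighted_coercivity (U : ℝ → ℝ) (hU0 : ∀ x, 0 ≤ U x)
    (hUint : Integrable U) (hUne : ¬ U =ᵐ[volume] 0) :
    ∃ C : ℝ, 0 < C ∧ ∀ (W f : ℝ → ℝ),
      (∀ x, 0 ≤ W x) →
      Integrable (fun x => Real.sqrt (1 + x ^ 2) * W x) →
      Differentiable ℝ f → MemLp f 2 volume → MemLp (deriv f) 2 volume →
      ∫ x : ℝ, W x * (f x) ^ 2 ≤
        C * (∫ x : ℝ, Real.sqrt (1 + x ^ 2) * W x) *
          ((∫ x : ℝ, (deriv f x) ^ 2) + ∫ x : ℝ, U x * (f x) ^ 2) := by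
  obtain ⟨R, hR, hm⟩ := exists_nonneg_setIntegral_Icc_pos hU0 hUint hUne
  set C := 2 * ((∫ x in Icc (-R) R, U x)⁻¹ + 1 + R)
  refine ⟨C, by positivity, fun W f hW0 hWi hf hf2 hf' => ?_⟩
  have hpt : ∀ x, W x * f x ^ 2 ≤ C * schrodingerForm U f * (√(1 + x ^ 2) * W x) := fun x =>
    calc W x * f x ^ 2 ≤ W x * (C * √(1 + x ^ 2) * schrodingerForm U f) :=
          mul_le_mul_of_nonneg_left
            (sq_le_mul_sqrt_one_add_sq_mul_schrodingerForm hR hU0 hUint hm hf hf2 hf' x) (hW0 x)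
      _ = C * schrodingerForm U f * (√(1 + x ^ 2) * W x) := by ring
  calc ∫ x, W x * f x ^ 2 ≤ ∫ x, C * schrodingerForm U f * (√(1 + x ^ 2) * W x) :=
        integral_mono_of_nonneg (ae_of_all _ fun x => mul_nonneg (hW0 x) (sq_nonneg _))
          (hWi.const_mul _) (ae_of_all _ hpt)
    _ = C * (∫ x, √(1 + x ^ 2) * W x) * schrodingerForm U f := by
      rw [integral_const_mul]; ring
end
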